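/- arXiv:1910.04333 — 6 statements merged into one kernel-verified Lean document; each statement's English description precedes it below -/
import Mathlib

section
/- Let U be an n×d real matrix with orthonormal columns (U^T U = I_d) and let D be an n×n diagonal matrix with strictly positive diagonal entries. Then the d×d matrix U^T D U − (U^T D^{-1} U)^{-1} is positive semidefinite. -/
/-!
The block matrix `[[D, 1], [1, D⁻¹]]` is positive semidefinite, its Schur complement being `0`.
Conjugating it by `diag(U, U)` gives `[[Uᴴ D U, 1], [1, Uᴴ D⁻¹ U]]` when `Uᴴ U = 1`, and the Schur
complement of the (positive definite) lower right block of this matrix is `Uᴴ D U - (Uᴴ D⁻¹ U)⁻¹`.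
-/

open Matrix

namespace Matrix.PosDef

variable {m n K : Type*} [Fintype m] [Fintype n] [DecidableEq m]
  [Field K] [PartialOrder K] [StarRing K] [StarOrderedRing K]

theorem posSemidef_fromBlocks_one_inv {D : Matrix m m K} (hD : D.PosDef) :
    (fromBlocks D 1 1 D⁻¹).PosSemidef := by
  have := hD.isUnit.invertible
  simpa using (fromBlocks₁₁ (1 : Matrix m m K) D⁻¹ hD).2 (by simpa using PosSemidef.zero)

theorem posSemidef_fromBlocks_conjTranspose_mul_mul {D : Matrix m m K} (hD : D.PosDef)
    (U : Matrix m n K) :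
    (fromBlocks (Uᴴ * D * U) (Uᴴ * U) (Uᴴ * U) (Uᴴ * D⁻¹ * U)).PosSemidef := by
  have h := hD.posSemidef_fromBlocks_one_inv.conjTranspose_mul_mul_same (fromBlocks U 0 0 U)
  rw [fromBlocks_conjTranspose, conjTranspose_zero, fromBlocks_multiply, fromBlocks_multiply,
    Matrix.mul_one, Matrix.mul_one] at h
  simpa only [Matrix.mul_zero, Matrix.zero_mul, add_zero, zero_add] using h

theorem posSemidef_conjTranspose_mul_mul_sub_inv [DecidableEq n] {D : Matrix m m K}
    (hD : D.PosDef) {U : Matrix m n K} (hU : Uᴴ * U = 1) :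
    (Uᴴ * D * U - (Uᴴ * D⁻¹ * U)⁻¹).PosSemidef := by
  have hU_inj : Function.Injective U.mulVec :=
    Function.LeftInverse.injective (g := (Uᴴ *ᵥ ·)) fun x => by
      simp only [mulVec_mulVec, hU, one_mulVec]
  have hB : (Uᴴ * D⁻¹ * U).PosDef := hD.inv.conjTranspose_mul_mul_same hU_inj
  have := hB.isUnit.invertible
  have hblocks := hD.posSemidef_fromBlocks_conjTranspose_mul_mul U
  rw [hU] at hblocks
  simpa using (fromBlocks₂₂ _ (1 : Matrix n n K) hB).1 (by rwa [conjTranspose_one])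

end Matrix.PosDef

theorem stmt_0 (n d : ℕ) (U : Matrix (Fin n) (Fin d) ℝ) (hU : Uᵀ * U = 1)
    (w : Fin n → ℝ) (hw : ∀ i, 0 < w i) :
    (Uᵀ * Matrix.diagonal w * U - (Uᵀ * (Matrix.diagonal w)⁻¹ * U)⁻¹).PosSemidef := by
  rw [← conjTranspose_eq_transpose_of_trivial] at hU ⊢
  exact (posDef_diagonal_iff.2 hw).posSemidef_conjTranspose_mul_mul_sub_inv hU
end

section
/- Let x_1,…,x_n ∈ ℝ^d be vectors such that S = Σ_{j=1}^n x_j x_j^T is invertible, and let w_1,…,w_n > 0. Then S^{-1} (Σ_{j=1}^n w_j x_j x_j^T) S^{-1} − (Σ_{j=1}^n w_j^{-1} x_j x_j^T)^{-1} is positive semidefinite. -/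
/-!
With `X` the matrix whose rows are the `x j` and `D = diagonal w`, the three sums are the Gram
matrices `S = Xᴴ X`, `A = Xᴴ D X` and `B = Xᴴ D⁻¹ X`. The block matrix `[[B, S], [S, A]]` is
`Yᴴ [[D⁻¹, 1], [1, D]] Y` with `Y = diag(X, X)`, and `[[D⁻¹, 1], [1, D]]` is positive semidefinite
since its Schur complement `D - (D⁻¹)⁻¹` vanishes. As `B` is positive definite, the Schur
complement `A - S B⁻¹ S` is positive semidefinite, and conjugating it by `S⁻¹` gives the claim.
-/

open Matrix

namespace Matrix

theorem sum_smul_vecMulVec_self_eq {ι m R : Type*} [Fintype ι] [DecidableEq ι] [CommSemiring R]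
    (x : ι → m → R) (c : ι → R) :
    ∑ j, c j • vecMulVec (x j) (x j) = (of x)ᵀ * diagonal c * of x := by
  ext a b
  simp [sum_apply, mul_apply, vecMulVec_apply, diagonal_apply, mul_comm, mul_left_comm]

variable {ι m 𝕜 : Type*} [Fintype ι] [DecidableEq ι] [Fintype m]
  [Field 𝕜] [PartialOrder 𝕜] [StarRing 𝕜] [StarOrderedRing 𝕜]

theorem PosDef.posSemidef_fromBlocks_inv_one_one_self {D : Matrix ι ι 𝕜} (hD : D.PosDef) :
    (fromBlocks D⁻¹ 1 1 D).PosSemidef := by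
  have := hD.isUnit.invertible
  have := hD.inv.isUnit.invertible
  have h := hD.inv.fromBlocks₁₁ (1 : Matrix ι ι 𝕜) D
  rw [conjTranspose_one, inv_inv_of_invertible, Matrix.one_mul, Matrix.mul_one, sub_self] at h
  exact h.2 PosSemidef.zero

theorem PosDef.posSemidef_fromBlocks_gram {D : Matrix ι ι 𝕜} (hD : D.PosDef)
    (X : Matrix ι m 𝕜) :
    (fromBlocks (Xᴴ * D⁻¹ * X) (Xᴴ * X) (Xᴴ * X) (Xᴴ * D * X)).PosSemidef := by
  simpa [fromBlocks_conjTranspose, fromBlocks_multiply] using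
    hD.posSemidef_fromBlocks_inv_one_one_self.conjTranspose_mul_mul_same (fromBlocks X 0 0 X)

theorem PosDef.posSemidef_gram_sandwich_sub_inv [DecidableEq m] {D : Matrix ι ι 𝕜}
    (hD : D.PosDef) {X : Matrix ι m 𝕜} (hX : IsUnit (Xᴴ * X)) :
    ((Xᴴ * X)⁻¹ * (Xᴴ * D * X) * (Xᴴ * X)⁻¹ - (Xᴴ * D⁻¹ * X)⁻¹).PosSemidef := by
  set G := Xᴴ * X with hG
  have hGherm : Gᴴ = G := by simp [hG]
  have hXinj : Function.Injective X.mulVec := by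
    refine Function.Injective.of_comp (f := Xᴴ.mulVec) ?_
    simpa [Function.comp_def, mulVec_mulVec, ← hG] using mulVec_injective_iff_isUnit.2 hX
  have hB : (Xᴴ * D⁻¹ * X).PosDef := hD.inv.conjTranspose_mul_mul_same hXinj
  have := hB.isUnit.invertible
  have hSchur : (Xᴴ * D * X - G * (Xᴴ * D⁻¹ * X)⁻¹ * G).PosSemidef := by
    have h := hB.fromBlocks₁₁ G (Xᴴ * D * X)
    rw [hGherm] at h
    exact h.1 (hD.posSemidef_fromBlocks_gram X)
  have h := hSchur.conjTranspose_mul_mul_same G⁻¹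
  rw [conjTranspose_nonsing_inv, hGherm] at h
  have := hX.invertible
  simpa [Matrix.mul_sub, Matrix.sub_mul, Matrix.mul_assoc] using h

end Matrix

theorem stmt_1 (n d : ℕ) (x : Fin n → Fin d → ℝ) (w : Fin n → ℝ)
    (hw : ∀ j, 0 < w j)
    (hS : IsUnit (∑ j, Matrix.vecMulVec (x j) (x j)).det) :
    ((∑ j, Matrix.vecMulVec (x j) (x j))⁻¹
        * (∑ j, w j • Matrix.vecMulVec (x j) (x j))
        * (∑ j, Matrix.vecMulVec (x j) (x j))⁻¹
      - (∑ j, (w j)⁻¹ • Matrix.vecMulVec (x j) (x j))⁻¹).PosSemidef := by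
  have hD : (diagonal w).PosDef := posDef_diagonal_iff.2 hw
  have hDinv : (diagonal w)⁻¹ = diagonal fun j => (w j)⁻¹ := by
    refine inv_eq_left_inv ?_
    simp [diagonal_mul_diagonal, fun j => inv_mul_cancel₀ (hw j).ne']
  have hGram : ∑ j, vecMulVec (x j) (x j) = (of x)ᵀ * of x := by
    simpa using sum_smul_vecMulVec_self_eq x 1
  rw [hGram] at hS ⊢
  rw [sum_smul_vecMulVec_self_eq, sum_smul_vecMulVec_self_eq x fun j => (w j)⁻¹, ← hDinv,
    ← conjTranspose_eq_transpose_of_trivial]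
  exact hD.posSemidef_gram_sandwich_sub_inv ((isUnit_iff_isUnit_det _).2 hS)
end

section
/- Let p, q ∈ (0,1) and π₁, π₂ > 0 with π₁ + π₂ = 1. Define Σ(p) = (π₁ p⁴(1−p²) + π₂ p q³(1−pq)) / (π₁ p² + π₂ q²)² and G(p) = π₁ p² / (p²(1−p²)) + π₂ q² / (pq(1−pq)). Then G(p) · Σ(p) ≥ 1, i.e., Σ(p) ≥ G(p)^{-1}. -/
lemma key_cs (a b v₁ v₂ : ℝ) (ha : 0 < a) (hb : 0 < b) (h1 : 0 < v₁) (h2 : 0 < v₂) :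
    (a + b)^2 ≤ (a / v₁ + b / v₂) * (a * v₁ + b * v₂) := by
  rw [div_add_div _ _ (ne_of_gt h1) (ne_of_gt h2), div_mul_eq_mul_div,
    le_div_iff₀ (mul_pos h1 h2)]
  nlinarith [sq_nonneg (v₁ - v₂), mul_pos ha hb, mul_pos h1 h2]

theorem stmt_4 (p q π₁ π₂ : ℝ) (hp : p ∈ Set.Ioo (0:ℝ) 1) (hq : q ∈ Set.Ioo (0:ℝ) 1)
    (hπ₁ : 0 < π₁) (hπ₂ : 0 < π₂) (hπ : π₁ + π₂ = 1) :
    1 ≤ (π₁ * p^2 / (p^2 * (1 - p^2)) + π₂ * q^2 / (p*q * (1 - p*q)))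
        * ((π₁ * p^4 * (1 - p^2) + π₂ * p * q^3 * (1 - p*q)) / (π₁ * p^2 + π₂ * q^2)^2) := by
  obtain ⟨hp0, hp1⟩ := hp
  obtain ⟨hq0, hq1⟩ := hq
  have hv1 : 0 < p^2 * (1 - p^2) := mul_pos (by positivity) (by nlinarith)
  have hv2 : 0 < p*q * (1 - p*q) := mul_pos (by positivity) (by nlinarith)
  have ha : 0 < π₁ * p^2 := by positivity
  have hb : 0 < π₂ * q^2 := by positivity
  have hZ : 0 < (π₁ * p^2 + π₂ * q^2)^2 := by positivity
  rw [mul_div_assoc', le_div_iff₀ hZ, one_mul]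
  have := key_cs (π₁ * p^2) (π₂ * q^2) (p^2 * (1 - p^2)) (p*q * (1 - p*q)) ha hb hv1 hv2
  calc (π₁ * p^2 + π₂ * q^2)^2
      ≤ (π₁ * p^2 / (p^2 * (1 - p^2)) + π₂ * q^2 / (p*q * (1 - p*q)))
        * (π₁ * p^2 * (p^2 * (1 - p^2)) + π₂ * q^2 * (p*q * (1 - p*q))) := this
    _ = _ := by ring
end

section
/- Let p, q ∈ (0,1) with p ≠ q and π₁, π₂ > 0 with π₁ + π₂ = 1, and define Σ(p) and G(p) as in the two-block stochastic block model. Then G(p)·Σ(p) = 1 if and only if q = (1 − p²)/p. -/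
theorem stmt_5 (p q π₁ π₂ : ℝ) (hp : p ∈ Set.Ioo (0:ℝ) 1) (hq : q ∈ Set.Ioo (0:ℝ) 1)
    (hpq : p ≠ q) (hπ₁ : 0 < π₁) (hπ₂ : 0 < π₂) (hπ : π₁ + π₂ = 1) :
    (π₁ / (1 - p^2) + π₂ * q / (p * (1 - p*q)))
        * ((π₁ * p^4 * (1 - p^2) + π₂ * p * q^3 * (1 - p*q)) / (π₁ * p^2 + π₂ * q^2)^2) = 1
      ↔ q = (1 - p^2) / p := by
  obtain ⟨hp0, hp1⟩ := hp
  obtain ⟨hq0, hq1⟩ := hq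
  have hA : 0 < 1 - p^2 := by nlinarith
  have hB : 0 < 1 - p*q := by nlinarith
  have hD : 0 < π₁ * p^2 + π₂ * q^2 := by positivity
  have key : (π₁ / (1 - p^2) + π₂ * q / (p * (1 - p*q)))
        * ((π₁ * p^4 * (1 - p^2) + π₂ * p * q^3 * (1 - p*q)) / (π₁ * p^2 + π₂ * q^2)^2) - 1
      = π₁ * π₂ * p^2 * q * (p*(1-p^2) - q*(1-p*q))^2
        / ((1 - p^2) * (p * (1 - p*q)) * (π₁ * p^2 + π₂ * q^2)^2) := by
    field_simp
    ring
  constructor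
  · intro h
    have h0 : π₁ * π₂ * p^2 * q * (p*(1-p^2) - q*(1-p*q))^2
        / ((1 - p^2) * (p * (1 - p*q)) * (π₁ * p^2 + π₂ * q^2)^2) = 0 := by
      rw [← key, h]; ring
    have hden : (1 - p^2) * (p * (1 - p*q)) * (π₁ * p^2 + π₂ * q^2)^2 ≠ 0 := by positivity
    have h1 : π₁ * π₂ * p^2 * q * (p*(1-p^2) - q*(1-p*q))^2 = 0 := by
      exact (div_eq_zero_iff.mp h0).resolve_right hden
    have h2 : (p*(1-p^2) - q*(1-p*q))^2 = 0 := by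
      have hc : 0 < π₁ * π₂ * p^2 * q := by positivity
      nlinarith [sq_nonneg (p*(1-p^2) - q*(1-p*q))]
    have h3 : p*(1-p^2) - q*(1-p*q) = 0 := by
      exact pow_eq_zero_iff (by norm_num) |>.mp h2
    have h4 : (p - q) * (1 - p^2 - p*q) = 0 := by linear_combination h3
    rcases mul_eq_zero.mp h4 with h5 | h5
    · exact absurd (by linarith : p = q) hpq
    · field_simp
      linarith
  · intro h
    have hq' : p * q = 1 - p^2 := by
      rw [h]; field_simp
    have hz : p*(1-p^2) - q*(1-p*q) = 0 := by
      rw [hq']; ring_nf; nlinarith [hq']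
    have : (π₁ / (1 - p^2) + π₂ * q / (p * (1 - p*q)))
        * ((π₁ * p^4 * (1 - p^2) + π₂ * p * q^3 * (1 - p*q)) / (π₁ * p^2 + π₂ * q^2)^2) - 1 = 0 := by
      rw [key, hz]; simp
    linarith
end

section
/- Let p, q ∈ (0,1) with p ≠ q and π₁, π₂ > 0 with π₁ + π₂ = 1, and define Σ(q) = (π₁ p³ q(1−pq) + π₂ q⁴(1−q²)) / (π₁ p² + π₂ q²)² and G(q) = π₁ p/(q(1−pq)) + π₂/(1−q²). Then G(q)·Σ(q) = 1 if and only if q = (√(p²+4) − p)/2. -/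
/-!
Write `G(q) = a₁ / v₁ + a₂ / v₂` and `Σ(q) = (a₁ v₁ + a₂ v₂) / (a₁ + a₂)²` with weights
`a₁ = π₁ p²`, `a₂ = π₂ q²` and `v₁ = p q (1 - p q)`, `v₂ = q² (1 - q²)`. The Lagrange identity
`(a₁ v₁ + a₂ v₂)(a₁ / v₁ + a₂ / v₂) - (a₁ + a₂)² = a₁ a₂ (v₁ - v₂)² / (v₁ v₂)` shows that
`G Σ = 1` exactly when `v₁ = v₂`, and `v₁ - v₂ = q (p - q)(1 - p q - q²)`; for `p ≠ q` this is the
quadratic `q² + p q = 1`, whose positive root is `(√(p² + 4) - p) / 2`.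
-/

lemma mul_add_div_sub_sq_eq {a₁ a₂ v₁ v₂ : ℝ} (hv₁ : v₁ ≠ 0) (hv₂ : v₂ ≠ 0) :
    (a₁ * v₁ + a₂ * v₂) * (a₁ / v₁ + a₂ / v₂) - (a₁ + a₂) ^ 2
      = a₁ * a₂ * (v₁ - v₂) ^ 2 / (v₁ * v₂) := by
  field_simp
  ring

lemma mul_add_div_eq_sq_iff {a₁ a₂ v₁ v₂ : ℝ} (ha₁ : a₁ ≠ 0) (ha₂ : a₂ ≠ 0)
    (hv₁ : v₁ ≠ 0) (hv₂ : v₂ ≠ 0) :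
    (a₁ * v₁ + a₂ * v₂) * (a₁ / v₁ + a₂ / v₂) = (a₁ + a₂) ^ 2 ↔ v₁ = v₂ := by
  rw [← sub_eq_zero, mul_add_div_sub_sq_eq hv₁ hv₂]
  simp [ha₁, ha₂, hv₁, hv₂, sub_eq_zero]

lemma eq_sqrt_sub_div_two_iff {p q : ℝ} (h : 0 ≤ 2 * q + p) :
    q = (√(p ^ 2 + 4) - p) / 2 ↔ q ^ 2 + p * q - 1 = 0 := by
  have hsqrt : q = (√(p ^ 2 + 4) - p) / 2 ↔ √(p ^ 2 + 4) = 2 * q + p := by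
    constructor <;> intro h' <;> linarith
  rw [hsqrt, Real.sqrt_eq_iff_eq_sq (by positivity) h]
  constructor <;> intro h' <;> linarith

theorem stmt_6_general (p q π₁ π₂ : ℝ) (hp : p ∈ Set.Ioo (0:ℝ) 1) (hq : q ∈ Set.Ioo (0:ℝ) 1)
    (hpq : p ≠ q) (hπ₁ : 0 < π₁) (hπ₂ : 0 < π₂) :
    (π₁ * p / (q * (1 - p*q)) + π₂ / (1 - q^2))
        * ((π₁ * p^3 * q * (1 - p*q) + π₂ * q^4 * (1 - q^2)) / (π₁ * p^2 + π₂ * q^2)^2) = 1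
      ↔ q = (Real.sqrt (p^2 + 4) - p) / 2 := by
  obtain ⟨hp₀, hp₁⟩ := hp
  obtain ⟨hq₀, hq₁⟩ := hq
  have hv₁ : 0 < p * q * (1 - p * q) := mul_pos (by positivity) (by nlinarith)
  have hv₂ : 0 < q ^ 2 * (1 - q ^ 2) := mul_pos (by positivity) (by nlinarith)
  have hG : π₁ * p / (q * (1 - p * q)) + π₂ / (1 - q ^ 2)
      = π₁ * p ^ 2 / (p * q * (1 - p * q)) + π₂ * q ^ 2 / (q ^ 2 * (1 - q ^ 2)) := by
    field_simp
  have hN : π₁ * p ^ 3 * q * (1 - p * q) + π₂ * q ^ 4 * (1 - q ^ 2)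
      = π₁ * p ^ 2 * (p * q * (1 - p * q)) + π₂ * q ^ 2 * (q ^ 2 * (1 - q ^ 2)) := by ring
  have hv : p * q * (1 - p * q) - q ^ 2 * (1 - q ^ 2) = q * (p - q) * -(q ^ 2 + p * q - 1) := by
    ring
  rw [hG, hN, mul_div_assoc', div_eq_one_iff_eq (by positivity), mul_comm,
    mul_add_div_eq_sq_iff (by positivity) (by positivity) hv₁.ne' hv₂.ne', ← sub_eq_zero, hv,
    eq_sqrt_sub_div_two_iff (by linarith)]
  simp only [mul_eq_zero, neg_eq_zero, hq₀.ne', sub_ne_zero.mpr hpq, or_self, false_or]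

theorem stmt_6 (p q π₁ π₂ : ℝ) (hp : p ∈ Set.Ioo (0:ℝ) 1) (hq : q ∈ Set.Ioo (0:ℝ) 1)
    (hpq : p ≠ q) (hπ₁ : 0 < π₁) (hπ₂ : 0 < π₂) (hπ : π₁ + π₂ = 1) :
    (π₁ * p / (q * (1 - p*q)) + π₂ / (1 - q^2))
        * ((π₁ * p^3 * q * (1 - p*q) + π₂ * q^4 * (1 - q^2)) / (π₁ * p^2 + π₂ * q^2)^2) = 1
      ↔ q = (Real.sqrt (p^2 + 4) - p) / 2 :=
  stmt_6_general p q π₁ π₂ hp hq hpq hπ₁ hπ₂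
end

section
/- Let p, q ∈ (0,1) and π₁, π₂ > 0 with π₁ + π₂ = 1. Define G(p) = π₁/(1−p²) + π₂q/(p(1−pq)) and G(q) = π₁p/(q(1−pq)) + π₂/(1−q²). Then the quantity (p−q)²·{G(p)^{-1/2} + G(q)^{-1/2}}^{-2} is greater than or equal to (p−q)²·{((√p+√q)/(2√p))G(p)^{-1/2} + ((√p+√q)/(2√q))G(q)^{-1/2}}^{-2}. -/
private lemma aux_ineq (s t x y : ℝ) (hs : 0 < s) (ht : 0 < t) (hx : 0 < x) (hy : 0 < y)
    (hts : t ≤ s) (hxy : t * x ≤ s * y) :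
    (((s + t) / (2 * s) * x + (s + t) / (2 * t) * y)^2)⁻¹ ≤ ((x + y)^2)⁻¹ := by
  have h1 : (s + t) / (2 * s) * x + (s + t) / (2 * t) * y - (x + y)
      = (s - t) * (s * y - t * x) / (2 * s * t) := by
    field_simp
    ring
  have h2 : 0 ≤ (s - t) * (s * y - t * x) / (2 * s * t) :=
    div_nonneg (mul_nonneg (by linarith) (by linarith)) (by positivity)
  have hB : x + y ≤ (s + t) / (2 * s) * x + (s + t) / (2 * t) * y := by linarith
  have hA : 0 < x + y := by linarith
  have hsq : (x + y)^2 ≤ ((s + t) / (2 * s) * x + (s + t) / (2 * t) * y)^2 :=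
    pow_le_pow_left₀ hA.le hB 2
  exact inv_anti₀ (by positivity) hsq

private lemma key_cross (p q π₁ π₂ : ℝ) (hp0 : 0 < p) (hp1 : p < 1) (hq0 : 0 < q) (hq1 : q < 1)
    (hπ₁ : 0 < π₁) (hπ₂ : 0 < π₂) (hqp : q ≤ p) :
    q * (π₁ * p / (q * (1 - p*q)) + π₂ / (1 - q^2))
      ≤ p * (π₁ / (1 - p^2) + π₂ * q / (p * (1 - p*q))) := by
  have hd1 : 0 < 1 - p^2 := by nlinarith
  have hd2 : 0 < 1 - p*q := by nlinarith
  have hd3 : 0 < 1 - q^2 := by nlinarith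
  have e1 : q * (π₁ * p / (q * (1 - p*q)) + π₂ / (1 - q^2))
      = π₁ * p / (1 - p*q) + π₂ * q / (1 - q^2) := by
    field_simp
  have e2 : p * (π₁ / (1 - p^2) + π₂ * q / (p * (1 - p*q)))
      = π₁ * p / (1 - p^2) + π₂ * q / (1 - p*q) := by
    field_simp
  rw [e1, e2]
  have t1 : π₁ * p / (1 - p*q) ≤ π₁ * p / (1 - p^2) := by
    apply div_le_div_of_nonneg_left (by positivity) hd1
    nlinarith
  have t2 : π₂ * q / (1 - q^2) ≤ π₂ * q / (1 - p*q) := by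
    apply div_le_div_of_nonneg_left (by positivity) hd2
    nlinarith
  linarith

theorem stmt_19 (p q π₁ π₂ : ℝ) (hp : p ∈ Set.Ioo (0:ℝ) 1) (hq : q ∈ Set.Ioo (0:ℝ) 1)
    (hπ₁ : 0 < π₁) (hπ₂ : 0 < π₂) (hπ : π₁ + π₂ = 1)
    (Gp Gq : ℝ)
    (hGp : Gp = π₁ / (1 - p^2) + π₂ * q / (p * (1 - p*q)))
    (hGq : Gq = π₁ * p / (q * (1 - p*q)) + π₂ / (1 - q^2)) :
    (p - q)^2 * (((Real.sqrt p + Real.sqrt q) / (2 * Real.sqrt p) * (Real.sqrt Gp)⁻¹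
          + (Real.sqrt p + Real.sqrt q) / (2 * Real.sqrt q) * (Real.sqrt Gq)⁻¹)^2)⁻¹
      ≤ (p - q)^2 * (((Real.sqrt Gp)⁻¹ + (Real.sqrt Gq)⁻¹)^2)⁻¹ := by
  obtain ⟨hp0, hp1⟩ := hp
  obtain ⟨hq0, hq1⟩ := hq
  have hd1 : 0 < 1 - p^2 := by nlinarith
  have hd2 : 0 < 1 - p*q := by nlinarith
  have hd3 : 0 < 1 - q^2 := by nlinarith
  have hGp0 : 0 < Gp := by rw [hGp]; positivity
  have hGq0 : 0 < Gq := by rw [hGq]; positivity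
  have hsp : 0 < Real.sqrt p := Real.sqrt_pos.mpr hp0
  have hsq : 0 < Real.sqrt q := Real.sqrt_pos.mpr hq0
  have hsGp : 0 < Real.sqrt Gp := Real.sqrt_pos.mpr hGp0
  have hsGq : 0 < Real.sqrt Gq := Real.sqrt_pos.mpr hGq0
  have hx : 0 < (Real.sqrt Gp)⁻¹ := by positivity
  have hy : 0 < (Real.sqrt Gq)⁻¹ := by positivity
  -- the key cross inequality in either direction
  have cross : ∀ a b Ga Gb : ℝ, 0 < a → 0 < b → 0 < Ga → 0 < Gb →
      b * Gb ≤ a * Ga →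
      Real.sqrt b * (Real.sqrt Ga)⁻¹ ≤ Real.sqrt a * (Real.sqrt Gb)⁻¹ := by
    intro a b Ga Gb ha hb hGa hGb hle
    have h1 : Real.sqrt (b * Gb) ≤ Real.sqrt (a * Ga) := Real.sqrt_le_sqrt hle
    rw [Real.sqrt_mul hb.le, Real.sqrt_mul ha.le] at h1
    rw [← div_eq_mul_inv, ← div_eq_mul_inv,
      div_le_div_iff₀ (Real.sqrt_pos.mpr hGa) (Real.sqrt_pos.mpr hGb)]
    exact h1
  rcases le_total q p with hqp | hpq
  · have hkey : q * Gq ≤ p * Gp := by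
      rw [hGp, hGq]; exact key_cross p q π₁ π₂ hp0 hp1 hq0 hq1 hπ₁ hπ₂ hqp
    have hc := cross p q Gp Gq hp0 hq0 hGp0 hGq0 hkey
    have := aux_ineq (Real.sqrt p) (Real.sqrt q) (Real.sqrt Gp)⁻¹ (Real.sqrt Gq)⁻¹
      hsp hsq hx hy (Real.sqrt_le_sqrt hqp) hc
    exact mul_le_mul_of_nonneg_left this (sq_nonneg _)
  · have hkey : p * Gp ≤ q * Gq := by
      rw [hGp, hGq]
      have := key_cross q p π₂ π₁ hq0 hq1 hp0 hp1 hπ₂ hπ₁ hpq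
      have e : p * q = q * p := mul_comm p q
      rw [e]
      linarith [this]
    have hc := cross q p Gq Gp hq0 hp0 hGq0 hGp0 hkey
    have h := aux_ineq (Real.sqrt q) (Real.sqrt p) (Real.sqrt Gq)⁻¹ (Real.sqrt Gp)⁻¹
      hsq hsp hy hx (Real.sqrt_le_sqrt hpq) hc
    have e1 : (Real.sqrt q + Real.sqrt p) / (2 * Real.sqrt q) * (Real.sqrt Gq)⁻¹
        + (Real.sqrt q + Real.sqrt p) / (2 * Real.sqrt p) * (Real.sqrt Gp)⁻¹
        = (Real.sqrt p + Real.sqrt q) / (2 * Real.sqrt p) * (Real.sqrt Gp)⁻¹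
        + (Real.sqrt p + Real.sqrt q) / (2 * Real.sqrt q) * (Real.sqrt Gq)⁻¹ := by ring
    have e2 : (Real.sqrt Gq)⁻¹ + (Real.sqrt Gp)⁻¹ = (Real.sqrt Gp)⁻¹ + (Real.sqrt Gq)⁻¹ := by ring
    rw [e1, e2] at h
    exact mul_le_mul_of_nonneg_left h (sq_nonneg _)
end
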